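/- arXiv:2305.18198 — 8 statements merged into one kernel-verified Lean document; each statement's English description precedes it below -/
import Mathlib

section
/- If t1 is an nsync statement, t2 is any statement from a different thread, and t2 is enabled at state s, then t1 is enabled at s if and only if t1 is enabled at execute(s, t2). (Statements from other threads can neither enable nor disable an nsync statement.) -/
namespace MC

/-- Statements of a thread: acquire/release a lock, barrier exit, or an nsync statement. -/
inductive Stmt (Lock NStmt : Type) where
  | acquire : Lock → Stmt Lock NStmt
  | release : Lock → Stmt Lock NStmt
  | exit : Stmt Lock NStmt
  | nsync : NStmt → Stmt Lock NStmt

/-- The kind of a local state: acquire state (with its lock), release state,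
barrier state, nsync state, or terminal state. -/
inductive LKind (Lock : Type) where
  | acquire : Lock → LKind Lock
  | release : Lock → LKind Lock
  | barrier : LKind Lock
  | nsync : LKind Lock
  | term : LKind Lock

def LKind.isBarrier {L : Type} : LKind L → Bool
  | .barrier => true
  | _ => false

def LKind.isTerm {L : Type} : LKind L → Bool
  | .term => true
  | _ => false

/-- A multithreaded program with thread ID set `Fin n`. -/
structure Program where
  n : ℕ
  npos : 0 < n
  Lock : Type
  Shared : Type
  Local : Fin n → Type
  NStmt : Fin n → Type
  kind : ∀ i, Local i → LKind Lock
  next : ∀ i, Local i → Local i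
  stmts : ∀ i, Local i → Set (NStmt i)
  stmtsNonempty : ∀ i σ, kind i σ = .nsync → (stmts i σ).Nonempty
  update : ∀ i, Local i → NStmt i → Shared → Local i × Shared

variable {P : Program}

/-- Global statements: a thread ID together with one of its statements. -/
abbrev GStmt (P : Program) := Σ i : Fin P.n, Stmt P.Lock (P.NStmt i)

def GStmt.isNsync (t : GStmt P) : Prop := ∃ m, t.2 = Stmt.nsync m
def GStmt.isExit (t : GStmt P) : Prop := t.2 = Stmt.exit
def GStmt.isExitZero (t : GStmt P) : Prop := t.2 = Stmt.exit ∧ (t.1 : ℕ) = 0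
def GStmt.isReleaseOn (t : GStmt P) (l : P.Lock) : Prop := t.2 = Stmt.release l
def GStmt.isAcquireOn (t : GStmt P) (l : P.Lock) : Prop := t.2 = Stmt.acquire l

/-- A global state: local state of each thread, shared state, lock state
(`none` = free), and barrier wait set. -/
structure GState (P : Program) where
  loc : ∀ i, P.Local i
  sh : P.Shared
  lk : P.Lock → Option (Fin P.n)
  wait : Set (Fin P.n)

/-- Enabledness of a statement at a global state. -/
def Enabled (s : GState P) : GStmt P → Prop
  | ⟨i, st⟩ =>
    match P.kind i (s.loc i), st with
    | .acquire l, .acquire l' => l = l' ∧ s.lk l = none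
    | .release l, .release l' => l = l' ∧ s.lk l = some i
    | .barrier, .exit => i ∉ s.wait
    | .nsync, .nsync m => m ∈ P.stmts i (s.loc i)
    | _, _ => False

open Classical in
/-- Execution of a statement at a global state. -/
noncomputable def execute (s : GState P) : GStmt P → GState P
  | ⟨i, st⟩ =>
    let r : P.Local i × P.Shared × (P.Lock → Option (Fin P.n)) :=
      match st with
      | .acquire l => (P.next i (s.loc i), s.sh, fun l' => if l' = l then some i else s.lk l')
      | .release l => (P.next i (s.loc i), s.sh, fun l' => if l' = l then none else s.lk l')
      | .exit => (P.next i (s.loc i), s.sh, s.lk)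
      | .nsync m => ((P.update i (s.loc i) m s.sh).1, (P.update i (s.loc i) m s.sh).2, s.lk)
    { loc := Function.update s.loc i r.1
      sh := r.2.1
      lk := r.2.2
      wait :=
        if (P.kind i r.1).isBarrier then
          (if s.wait ∪ {i} = Set.univ then (∅ : Set (Fin P.n)) else s.wait ∪ {i})
        else s.wait }

/-- Finite executions: `Exec s ts sf` means the statement sequence `ts` is
step-by-step enabled starting from `s` and leads to `sf`. -/
inductive Exec : GState P → List (GStmt P) → GState P → Prop
  | nil (s : GState P) : Exec s [] s
  | cons {s s' sf : GState P} {t : GStmt P} {l : List (GStmt P)} :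
      Enabled s t → execute s t = s' → Exec s' l sf → Exec s (t :: l) sf

/-- The program has no barrier local states. -/
def NoBarriers (P : Program) : Prop := ∀ i σ, P.kind i σ ≠ LKind.barrier

/-! ### Traces, events, happens-before, data races -/

/-- The thread ID of the event at position `k` of a trace (if any). -/
def tidAt (ts : List (GStmt P)) (k : ℕ) : Option (Fin P.n) := (ts[k]?).map (·.1)

/-- The statement at position `k` satisfies `p`. -/
def stmtIs (ts : List (GStmt P)) (k : ℕ) (p : GStmt P → Prop) : Prop :=
  ∃ t, ts[k]? = some t ∧ p t

/-- Intra-thread order on trace positions. -/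
def IntraThread (ts : List (GStmt P)) (j k : ℕ) : Prop :=
  j < k ∧ k < ts.length ∧ tidAt ts j = tidAt ts k

/-- Release-acquire relation on trace positions: a release of `l` is related to
the next subsequent acquire of `l`. -/
def RelAcq (ts : List (GStmt P)) (j k : ℕ) : Prop :=
  ∃ l : P.Lock, j < k ∧ stmtIs ts j (·.isReleaseOn l) ∧ stmtIs ts k (·.isAcquireOn l) ∧
    ∀ m, j < m → m < k → ¬ stmtIs ts m (·.isAcquireOn l)

/-- The barrier epoch of the event at position `k`: the number of barrier-exit
events of the same thread at positions `≤ k`. -/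
noncomputable def epoch (ts : List (GStmt P)) (k : ℕ) : ℕ :=
  Set.ncard {m : ℕ | m ≤ k ∧ tidAt ts m = tidAt ts k ∧ stmtIs ts m (·.isExit)}

/-- Barrier relation on trace positions: earlier epochs happen before later ones. -/
def BarrierRel (ts : List (GStmt P)) (j k : ℕ) : Prop :=
  j < ts.length ∧ k < ts.length ∧ epoch ts j < epoch ts k

/-- The happens-before relation on trace positions. -/
def HB (ts : List (GStmt P)) : ℕ → ℕ → Prop :=
  Relation.TransGen (fun j k => IntraThread ts j k ∨ RelAcq ts j k ∨ BarrierRel ts j k)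

/-- `C` is a conflict relation for `P`: symmetric, relating only nsync statements
from different threads, and non-conflicting nsync statements from different
threads commute whenever both are enabled. -/
structure IsConflictRel (P : Program) (C : GStmt P → GStmt P → Prop) : Prop where
  symm : ∀ t1 t2, C t1 t2 → C t2 t1
  nsync_left : ∀ t1 t2, C t1 t2 → t1.isNsync
  nsync_right : ∀ t1 t2, C t1 t2 → t2.isNsync
  diff : ∀ t1 t2, C t1 t2 → t1.1 ≠ t2.1
  commute : ∀ t1 t2, t1.isNsync → t2.isNsync → t1.1 ≠ t2.1 → ¬ C t1 t2 →
    ∀ s : GState P, Enabled s t1 → Enabled s t2 →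
      execute (execute s t1) t2 = execute (execute s t2) t1

/-- The events at positions `j` and `k` race: their statements conflict and the
positions are unordered by happens-before. -/
def Races (C : GStmt P → GStmt P → Prop) (ts : List (GStmt P)) (j k : ℕ) : Prop :=
  (∃ t1 t2, ts[j]? = some t1 ∧ ts[k]? = some t2 ∧ C t1 t2) ∧ ¬ HB ts j k ∧ ¬ HB ts k j

/-- The trace contains a data race. -/
def HasRace (C : GStmt P → GStmt P → Prop) (ts : List (GStmt P)) : Prop :=
  ∃ j k, Races C ts j k

/-- The event (statement with per-thread occurrence number) at position `k`. -/
def eventAt (ts : List (GStmt P)) (k : ℕ) : Option (GStmt P × ℕ) :=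
  (ts[k]?).map (fun t => (t, (ts.take (k+1)).countP (fun t' => decide (t'.1 = t.1))))

/-- The set of events of a trace. -/
def events (ts : List (GStmt P)) : Set (GStmt P × ℕ) :=
  {e | ∃ k, eventAt ts k = some e}

/-! ### The race-detecting state graph -/

/-- The edge relation of the local graph of thread `i`. -/
def isLocalStep (i : Fin P.n) (σ σ' : P.Local i) : Prop :=
  match P.kind i σ with
  | .nsync => ∃ m ζ, m ∈ P.stmts i σ ∧ (P.update i σ m ζ).1 = σ'
  | .term => False
  | _ => σ' = P.next i σ

/-- Choice of sets `R i` containing all acquire and release local states and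
meeting every cycle of the local graph of thread `i`. -/
structure RSets (P : Program) where
  R : ∀ i, Set (P.Local i)
  acq_mem : ∀ i σ l, P.kind i σ = LKind.acquire l → σ ∈ R i
  rel_mem : ∀ i σ l, P.kind i σ = LKind.release l → σ ∈ R i
  acyclic : ∀ i σ, σ ∉ R i →
    ¬ Relation.TransGen (fun a b => a ∉ R i ∧ b ∉ R i ∧ isLocalStep i a b) σ σ

/-- Thread `i` is normal at state `s`: its local state is not in `R i` and it
has an enabled statement. -/
def Normal (RS : RSets P) (s : GState P) (i : Fin P.n) : Prop :=
  s.loc i ∉ RS.R i ∧ ∃ st : Stmt P.Lock (P.NStmt i), Enabled s ⟨i, st⟩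

/-- A node of the race-detecting state graph: a state together with, for each
thread, the set of nsync statements recorded since its last synchronization. -/
structure RNode (P : Program) where
  st : GState P
  hist : ∀ i, Set (P.NStmt i)

/-- Edge relation of the race-detecting state graph. -/
def REdge (RS : RSets P) (u : RNode P) (t : GStmt P) (v : RNode P) : Prop :=
  Enabled u.st t ∧ v.st = execute u.st t ∧
  (∀ m, t.2 = Stmt.nsync m → v.hist t.1 = insert m (u.hist t.1)) ∧
  (¬ t.isNsync →
    ((t.isExitZero ∨ u.st.loc t.1 ∈ RS.R t.1) → v.hist t.1 = ∅) ∧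
    (¬ (t.isExitZero ∨ u.st.loc t.1 ∈ RS.R t.1) → v.hist t.1 = u.hist t.1)) ∧
  (∀ i, i ≠ t.1 →
    (t.isExitZero → v.hist i = ∅) ∧ (¬ t.isExitZero → v.hist i = u.hist i)) ∧
  ((∃ i, Normal RS u.st i) → Normal RS u.st t.1 ∧ ∀ j, Normal RS u.st j → t.1 ≤ j)

/-- Paths in the race-detecting state graph. -/
inductive RPath (RS : RSets P) : RNode P → List (GStmt P) → RNode P → Prop
  | nil (u : RNode P) : RPath RS u [] u
  | cons {u v w : RNode P} {t : GStmt P} {l : List (GStmt P)} :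
      REdge RS u t v → RPath RS v l w → RPath RS u (t :: l) w

/-- Reachability in the race-detecting state graph. -/
def RReach (RS : RSets P) (u v : RNode P) : Prop := ∃ l, RPath RS u l v

/-- Thread `i` detects a race at node `u`. -/
def ThreadDetects (C : GStmt P → GStmt P → Prop) (u : RNode P) (i : Fin P.n) : Prop :=
  ∃ j, j ≠ i ∧ ∃ m1 ∈ u.hist i, ∃ m2 ∈ u.hist j,
    C ⟨i, Stmt.nsync m1⟩ ⟨j, Stmt.nsync m2⟩

/-- The edge `(u,t,v)` detects a race: the moving thread arrives at an `R i`,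
barrier, or terminal local state and detects a race at the target node. -/
def EdgeDetects (RS : RSets P) (C : GStmt P → GStmt P → Prop)
    (u : RNode P) (t : GStmt P) (v : RNode P) : Prop :=
  REdge RS u t v ∧
  (v.st.loc t.1 ∈ RS.R t.1 ∨ (P.kind t.1 (v.st.loc t.1)).isBarrier = true ∨
    (P.kind t.1 (v.st.loc t.1)).isTerm = true) ∧
  ThreadDetects C v t.1

/-- The race-detecting state graph detects a race from `u0`. -/
def DetectsFrom (RS : RSets P) (C : GStmt P → GStmt P → Prop) (u0 : RNode P) : Prop :=
  ∃ u t v, RReach RS u0 u ∧ EdgeDetects RS C u t v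

/-- The initial node for state `s0`: all recorded sets empty. -/
def initNode (s0 : GState P) : RNode P := ⟨s0, fun _ => ∅⟩

/-! ### Abstract state graphs and density -/

/-- A state graph of `P`. -/
structure StateGraph (P : Program) where
  V : Type
  edge : V → GStmt P → V → Prop
  stateOf : V → GState P
  edge_enabled : ∀ {u t v}, edge u t v → Enabled (stateOf u) t
  edge_exec : ∀ {u t v}, edge u t v → stateOf v = execute (stateOf u) t
  edge_det : ∀ {u t v v'}, edge u t v → edge u t v' → v = v'

/-- The ample set of a node: the labels of its outgoing edges. -/
def StateGraph.ample (G : StateGraph P) (u : G.V) : Set (GStmt P) :=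
  {t | ∃ v, G.edge u t v}

/-- Paths in a state graph. -/
inductive GPath (G : StateGraph P) : G.V → List (GStmt P) → G.V → Prop
  | nil (u : G.V) : GPath G u [] u
  | cons {u v w : G.V} {t : GStmt P} {l : List (GStmt P)} :
      G.edge u t v → GPath G v l w → GPath G u (t :: l) w

/-- Density of a state graph (the four ample-set conditions). -/
def StateGraph.IsDense (G : StateGraph P) : Prop :=
  (∀ u, (∃ t, Enabled (G.stateOf u) t) → (G.ample u).Nonempty) ∧
  (∀ u t t', t ∈ G.ample u → Enabled (G.stateOf u) t' → t'.1 = t.1 → t' ∈ G.ample u) ∧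
  (∀ u, G.ample u ≠ {t | Enabled (G.stateOf u) t} → ∀ t ∈ G.ample u, t.isNsync) ∧
  (∀ u l, l ≠ [] → GPath G u l u →
    ∃ v l1 l2, l = l1 ++ l2 ∧ GPath G u l1 v ∧
      G.ample v = {t | Enabled (G.stateOf v) t})

/-! ### Paths as functions and block decompositions -/

/-- A path in the race-detecting state graph presented as a node function `f`
along a statement list `ts`. -/
def IsPathFn (RS : RSets P) (f : ℕ → RNode P) (ts : List (GStmt P)) : Prop :=
  ∀ k (h : k < ts.length), REdge RS (f k) (ts.get ⟨k, h⟩) (f (k+1))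

/-- The statement at position `m` continues the block started at position `b`:
it is from the same thread and that thread is normal at the node it executes from. -/
def SameBlockStep (RS : RSets P) (f : ℕ → RNode P) (ts : List (GStmt P)) (b m : ℕ) : Prop :=
  tidAt ts m = tidAt ts b ∧ ∃ t, ts[m]? = some t ∧ Normal RS (f m).st t.1

/-- `c 0 = 0 < c 1 < ⋯ < c N = |ts|` is the block decomposition of the path
`(f, ts)`: block `j` covers positions `[c j, c (j+1))`. -/
structure IsBlockDecomp (RS : RSets P) (f : ℕ → RNode P) (ts : List (GStmt P))
    (N : ℕ) (c : ℕ → ℕ) : Prop where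
  zero : c 0 = 0
  last : c N = ts.length
  mono : ∀ j, j < N → c j < c (j+1)
  inside : ∀ j, j < N → ∀ m, c j < m → m < c (j+1) → SameBlockStep RS f ts (c j) m
  boundary : ∀ j, j < N → c (j+1) < ts.length → ¬ SameBlockStep RS f ts (c j) (c (j+1))

/-- Block `j` is initial: its thread is normal at its starting node. -/
def BlockInitial (RS : RSets P) (f : ℕ → RNode P) (ts : List (GStmt P))
    (c : ℕ → ℕ) (j : ℕ) : Prop :=
  ∃ t, ts[c j]? = some t ∧ Normal RS (f (c j)).st t.1

/-- Block `j` is complete: its thread is not normal at its final node. -/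
def BlockComplete (RS : RSets P) (f : ℕ → RNode P) (ts : List (GStmt P))
    (c : ℕ → ℕ) (j : ℕ) : Prop :=
  ∀ t, ts[c j]? = some t → ¬ Normal RS (f (c (j+1))).st t.1

/-- The position permutation induced by transposing the adjacent segments
`[a,b)` and `[b,d)`. -/
def segSwap (a b d m : ℕ) : ℕ :=
  if m < a then m else if m < b then m + (d - b) else if m < d then m - (b - a) else m

/-- The position permutation induced by transposing positions `p` and `p+1`. -/
def posSwap (p m : ℕ) : ℕ :=
  if m = p then p + 1 else if m = p + 1 then p else m

/-- Statements from other threads can neither enable nor disable an nsync statement. -/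
theorem stmt0 (P : Program) (hnb : NoBarriers P)
    (s : GState P) (t1 t2 : GStmt P)
    (h1 : t1.isNsync) (hne : t1.1 ≠ t2.1) (h2 : Enabled s t2) :
    Enabled s t1 ↔ Enabled (execute s t2) t1 := by
  obtain ⟨i, st1⟩ := t1
  obtain ⟨m, hm⟩ := h1
  have hloc : (execute s t2).loc i = s.loc i := by
    obtain ⟨j, st2⟩ := t2
    cases st2 <;> simp [execute, Function.update_of_ne hne]
  cases st1 with
  | nsync a =>
    simp only [Enabled, hloc]
    rcases P.kind i (s.loc i) <;> simp
  | acquire l => exact absurd hm (by simp)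
  | release l => exact absurd hm (by simp)
  | exit => exact absurd hm (by simp)

end MC
end

section
/- If t1 is an nsync statement, t2 is any statement from a different thread, and t1 is enabled at state s, then t2 is enabled at s if and only if t2 is enabled at execute(s, t1). (An nsync statement can neither enable nor disable statements of other threads.) -/
namespace MC

variable {P : Program}

/-- An nsync statement can neither enable nor disable statements of other threads. -/
theorem stmt1 (P : Program) (hnb : NoBarriers P)
    (s : GState P) (t1 t2 : GStmt P)
    (h1 : t1.isNsync) (hne : t1.1 ≠ t2.1) (h2 : Enabled s t1) :
    Enabled s t2 ↔ Enabled (execute s t1) t2 := by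
  obtain ⟨i, st1⟩ := t1
  obtain ⟨mm, hm⟩ : ∃ mm : P.NStmt i, st1 = Stmt.nsync mm := h1
  subst hm
  obtain ⟨j, st2⟩ := t2
  have hji : j ≠ i := fun h => hne (by simp [h])
  have hnb' : ((P.kind i (P.update i (s.loc i) mm s.sh).1).isBarrier) = false := by
    cases h : P.kind i (P.update i (s.loc i) mm s.sh).1 <;>
      simp [LKind.isBarrier] at * <;> exact (hnb i _ h).elim
  have hloc : (execute s ⟨i, Stmt.nsync mm⟩).loc j = s.loc j := by
    simp [execute, Function.update, hji]
  have hlk : (execute s ⟨i, Stmt.nsync mm⟩).lk = s.lk := by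
    simp [execute]
  have hwait : (execute s ⟨i, Stmt.nsync mm⟩).wait = s.wait := by
    simp [execute, hnb']
  show Enabled s ⟨j, st2⟩ ↔ Enabled (execute s ⟨i, Stmt.nsync mm⟩) ⟨j, st2⟩
  unfold Enabled
  dsimp only
  rw [hloc, hlk, hwait]

end MC
end

section
/- If α' is an execution and α is a prefix of α', then the data race relation of α is contained in the data race relation of α': DR(α) ⊆ DR(α'). -/
namespace MC

variable {P : Program}

lemma exec_no_exit {s sf : GState P} {l : List (GStmt P)} (hnb : NoBarriers P)
    (h : Exec s l sf) : ∀ t ∈ l, t.2 ≠ Stmt.exit := by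
  induction h with
  | nil => simp
  | cons hen hex _ ih =>
    rename_i s1 s2 sfin t l
    intro u hu
    rcases List.mem_cons.1 hu with rfl | hu
    · intro hexit
      obtain ⟨i, st⟩ := u
      simp only at hexit
      subst hexit
      simp only [Enabled] at hen
      split at hen <;> simp_all [NoBarriers]
    · exact ih u hu

lemma no_exit_stmtIs {ts : List (GStmt P)} (h : ∀ t ∈ ts, t.2 ≠ Stmt.exit)
    (m : ℕ) : ¬ stmtIs ts m (·.isExit) := by
  rintro ⟨t, ht, hex⟩
  have := List.getElem?_eq_some_iff.1 ht
  exact h t (this.2 ▸ List.getElem_mem this.1) hex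

lemma epoch_eq_zero {ts : List (GStmt P)} (h : ∀ t ∈ ts, t.2 ≠ Stmt.exit)
    (k : ℕ) : epoch ts k = 0 := by
  unfold epoch
  convert Set.ncard_empty ℕ
  ext m
  simp only [Set.mem_setOf_eq, Set.mem_empty_iff_false, iff_false]
  rintro ⟨-, -, hst⟩
  exact no_exit_stmtIs h m hst

lemma step_lt {ts : List (GStmt P)} (h : ∀ t ∈ ts, t.2 ≠ Stmt.exit) {j k : ℕ}
    (hs : IntraThread ts j k ∨ RelAcq ts j k ∨ BarrierRel ts j k) : j < k := by
  rcases hs with ⟨hlt, _⟩ | ⟨_, hlt, _⟩ | ⟨_, _, hlt⟩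
  · exact hlt
  · exact hlt
  · rw [epoch_eq_zero h, epoch_eq_zero h] at hlt; omega

lemma getElem?_prefix {ts ext : List (GStmt P)} {m : ℕ} (hm : m < ts.length) :
    (ts ++ ext)[m]? = ts[m]? := by
  simp [List.getElem?_append, hm]

lemma stmtIs_prefix {ts ext : List (GStmt P)} {m : ℕ} (hm : m < ts.length)
    {p : GStmt P → Prop} (h : stmtIs (ts ++ ext) m p) : stmtIs ts m p := by
  obtain ⟨t, ht, hp⟩ := h
  exact ⟨t, by rwa [getElem?_prefix hm] at ht, hp⟩

lemma tidAt_prefix {ts ext : List (GStmt P)} {m : ℕ} (hm : m < ts.length) :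
    tidAt (ts ++ ext) m = tidAt ts m := by
  unfold tidAt; rw [getElem?_prefix hm]

lemma step_prefix {ts ext : List (GStmt P)}
    (h : ∀ t ∈ ts ++ ext, t.2 ≠ Stmt.exit) {j k : ℕ} (hk : k < ts.length)
    (hs : IntraThread (ts ++ ext) j k ∨ RelAcq (ts ++ ext) j k ∨
      BarrierRel (ts ++ ext) j k) :
    IntraThread ts j k ∨ RelAcq ts j k ∨ BarrierRel ts j k := by
  rcases hs with ⟨hjk, _, htid⟩ | ⟨l, hjk, hr, ha, hno⟩ | ⟨_, _, hlt⟩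
  · left
    refine ⟨hjk, hk, ?_⟩
    rw [tidAt_prefix (lt_trans hjk hk), tidAt_prefix hk] at htid
    exact htid
  · right; left
    refine ⟨l, hjk, stmtIs_prefix (lt_trans hjk hk) hr, stmtIs_prefix hk ha, ?_⟩
    intro m hm1 hm2 hst
    refine hno m hm1 hm2 ?_
    obtain ⟨t, ht, hp⟩ := hst
    exact ⟨t, by rwa [getElem?_prefix (lt_trans hm2 hk)], hp⟩
  · rw [epoch_eq_zero h, epoch_eq_zero h] at hlt; omega

lemma HB_prefix {ts ext : List (GStmt P)}
    (h : ∀ t ∈ ts ++ ext, t.2 ≠ Stmt.exit) {j k : ℕ} (hk : k < ts.length)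
    (hs : HB (ts ++ ext) j k) : HB ts j k := by
  induction hs with
  | single hstep => exact Relation.TransGen.single (step_prefix h hk hstep)
  | tail hprev hstep ih =>
    have hlt := step_lt h hstep
    exact Relation.TransGen.tail (ih (lt_trans hlt hk)) (step_prefix h hk hstep)

/-- The data race relation is monotone under extension of executions. -/
theorem stmt2 (P : Program) (hnb : NoBarriers P)
    (C : GStmt P → GStmt P → Prop) (hC : IsConflictRel P C)
    (s0 sf : GState P) (ts ext : List (GStmt P))
    (hexec : Exec s0 (ts ++ ext) sf) :
    ∀ j k, Races C ts j k → Races C (ts ++ ext) j k := by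
  have hne := exec_no_exit hnb hexec
  rintro j k ⟨⟨t1, t2, h1, h2, hc⟩, hjk, hkj⟩
  have hj : j < ts.length := by
    by_contra hge
    rw [List.getElem?_eq_none (le_of_not_gt hge)] at h1
    cases h1
  have hk : k < ts.length := by
    by_contra hge
    rw [List.getElem?_eq_none (le_of_not_gt hge)] at h2
    cases h2
  refine ⟨⟨t1, t2, ?_, ?_, hc⟩, ?_, ?_⟩
  · rw [getElem?_prefix hj]; exact h1
  · rw [getElem?_prefix hk]; exact h2
  · exact fun hhb => hjk (HB_prefix hne hk hhb)
  · exact fun hhb => hkj (HB_prefix hne hj hhb)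

end MC
end

section
/- Let α = (s0 →t1 ⋯ →tn sn) be a finite execution with trace e1⋯en, and suppose 1 ≤ i ≤ n−1, (e_i, e_{i+1}) ∉ HB(α), and (t_i, t_{i+1}) ∉ conflict. Then there exists a state s' such that α' obtained from α by transposing the i-th and (i+1)-th transitions (i.e., s_{i−1} →t_{i+1} s' →t_i s_{i+1}, with the rest unchanged) is an execution. Moreover [α] = [α'], HB(α) = HB(α'), and DR(α) = DR(α'). -/
namespace MC

variable {P : Program}

variable {P : Program}

lemma posSwap_invol (p m : ℕ) : posSwap p (posSwap p m) = m := by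
  simp only [posSwap]; split_ifs <;> omega

lemma posSwap_lt {p a b : ℕ} (h : a < b) (h2 : ¬(a = p ∧ b = p + 1)) :
    posSwap p a < posSwap p b := by
  simp only [posSwap]; split_ifs <;> omega

lemma posSwap_lt_len {p m L : ℕ} (h : m < L) (hp : p + 1 < L) : posSwap p m < L := by
  simp only [posSwap]; split_ifs <;> omega

lemma exec_wait (hnb : NoBarriers P) (s : GState P) (t : GStmt P) :
    (execute s t).wait = s.wait := by
  obtain ⟨i, st⟩ := t
  have h : ∀ σ : P.Local i, (P.kind i σ).isBarrier = false := by
    intro σ; have := hnb i σ; cases hk : P.kind i σ <;> simp [LKind.isBarrier] <;> exact (this hk).elim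
  cases st <;> simp [execute, h]

open Classical in
lemma exec_acq (hnb : NoBarriers P) (s : GState P) (i : Fin P.n) (l : P.Lock) :
    execute s ⟨i, Stmt.acquire l⟩ =
      ⟨Function.update s.loc i (P.next i (s.loc i)), s.sh,
       fun l' => if l' = l then some i else s.lk l', s.wait⟩ := by
  have := exec_wait hnb s ⟨i, Stmt.acquire l⟩
  cases hE : execute s ⟨i, Stmt.acquire l⟩
  simp_all [execute]

open Classical in
lemma exec_rel (hnb : NoBarriers P) (s : GState P) (i : Fin P.n) (l : P.Lock) :
    execute s ⟨i, Stmt.release l⟩ =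
      ⟨Function.update s.loc i (P.next i (s.loc i)), s.sh,
       fun l' => if l' = l then none else s.lk l', s.wait⟩ := by
  have := exec_wait hnb s ⟨i, Stmt.release l⟩
  cases hE : execute s ⟨i, Stmt.release l⟩
  simp_all [execute]

lemma exec_nsync (hnb : NoBarriers P) (s : GState P) (i : Fin P.n) (m : P.NStmt i) :
    execute s ⟨i, Stmt.nsync m⟩ =
      ⟨Function.update s.loc i (P.update i (s.loc i) m s.sh).1,
       (P.update i (s.loc i) m s.sh).2, s.lk, s.wait⟩ := by
  have := exec_wait hnb s ⟨i, Stmt.nsync m⟩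
  cases hE : execute s ⟨i, Stmt.nsync m⟩
  simp_all [execute]

lemma enabled_acq {s : GState P} {i : Fin P.n} {l : P.Lock} :
    Enabled s ⟨i, Stmt.acquire l⟩ ↔ P.kind i (s.loc i) = .acquire l ∧ s.lk l = none := by
  simp only [Enabled]
  cases hk : P.kind i (s.loc i) <;> simp_all

lemma enabled_rel {s : GState P} {i : Fin P.n} {l : P.Lock} :
    Enabled s ⟨i, Stmt.release l⟩ ↔ P.kind i (s.loc i) = .release l ∧ s.lk l = some i := by
  simp only [Enabled]
  cases hk : P.kind i (s.loc i) <;> simp_all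

lemma enabled_nsync {s : GState P} {i : Fin P.n} {m : P.NStmt i} :
    Enabled s ⟨i, Stmt.nsync m⟩ ↔ P.kind i (s.loc i) = .nsync ∧ m ∈ P.stmts i (s.loc i) := by
  simp only [Enabled]
  cases hk : P.kind i (s.loc i) <;> simp_all

lemma enabled_exit_false (hnb : NoBarriers P) {s : GState P} {i : Fin P.n} :
    ¬ Enabled s ⟨i, Stmt.exit⟩ := by
  intro h
  have hk := hnb i (s.loc i)
  simp only [Enabled] at h
  cases hkk : P.kind i (s.loc i) <;> simp_all

lemma exec_exit (hnb : NoBarriers P) (s : GState P) (i : Fin P.n) :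
    execute s ⟨i, Stmt.exit⟩ =
      ⟨Function.update s.loc i (P.next i (s.loc i)), s.sh, s.lk, s.wait⟩ := by
  have := exec_wait hnb s ⟨i, Stmt.exit⟩
  cases hE : execute s ⟨i, Stmt.exit⟩
  simp_all [execute]
lemma loc_exec_ne (hnb : NoBarriers P) (s : GState P) (t : GStmt P) {j : Fin P.n}
    (h : j ≠ t.1) : (execute s t).loc j = s.loc j := by
  obtain ⟨i, st⟩ := t
  cases st <;>
    simp_all [exec_acq hnb, exec_rel hnb, exec_nsync hnb, exec_exit hnb, Function.update_of_ne]

example : True := trivial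

lemma swap_step (hnb : NoBarriers P) {C : GStmt P → GStmt P → Prop} (hC : IsConflictRel P C)
    {s : GState P} {t1 t2 : GStmt P}
    (hdiff : t1.1 ≠ t2.1) (hnc : ¬ C t1 t2)
    (hra : ∀ l : P.Lock, ¬ (t1.isReleaseOn l ∧ t2.isAcquireOn l))
    (h1 : Enabled s t1) (h2 : Enabled (execute s t1) t2) :
    Enabled s t2 ∧ Enabled (execute s t2) t1 ∧
      execute (execute s t1) t2 = execute (execute s t2) t1 := by
  obtain ⟨i, st1⟩ := t1; obtain ⟨j, st2⟩ := t2
  replace hdiff : i ≠ j := hdiff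
  have hji : j ≠ i := hdiff.symm
  cases st1 with
  | exit => exact (enabled_exit_false hnb h1).elim
  | acquire l1 =>
    rw [enabled_acq] at h1
    obtain ⟨hk1, hl1⟩ := h1
    cases st2 with
    | exit => exact (enabled_exit_false hnb h2).elim
    | acquire l2 =>
      rw [enabled_acq, exec_acq hnb] at h2
      simp only [Function.update_of_ne hji] at h2
      obtain ⟨hk2, hl2⟩ := h2
      have hll : l2 ≠ l1 := by intro h; subst h; simp at hl2
      have hl2' : s.lk l2 = none := by simpa [if_neg hll] using hl2
      refine ⟨enabled_acq.mpr ⟨hk2, hl2'⟩, ?_, ?_⟩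
      · rw [exec_acq hnb, enabled_acq]
        simp [Function.update_of_ne hdiff, hk1, hll.symm, hl1]
      · rw [exec_acq hnb, exec_acq hnb, exec_acq hnb, exec_acq hnb]
        simp only [Function.update_of_ne hji, Function.update_of_ne hdiff]
        congr 1
        · exact Function.update_comm hdiff _ _ _
        · funext l'; by_cases e1 : l' = l1 <;> by_cases e2 : l' = l2 <;> simp_all
    | release l2 =>
      rw [enabled_rel, exec_acq hnb] at h2
      simp only [Function.update_of_ne hji] at h2
      obtain ⟨hk2, hl2⟩ := h2
      have hll : l2 ≠ l1 := by
        intro h; subst h; rw [if_pos rfl] at hl2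
        exact hdiff (Option.some.inj hl2)
      have hl2' : s.lk l2 = some j := by simpa [if_neg hll] using hl2
      refine ⟨enabled_rel.mpr ⟨hk2, hl2'⟩, ?_, ?_⟩
      · rw [exec_rel hnb, enabled_acq]
        simp [Function.update_of_ne hdiff, hk1, hll.symm, hl1]
      · rw [exec_acq hnb, exec_rel hnb, exec_rel hnb, exec_acq hnb]
        simp only [Function.update_of_ne hji, Function.update_of_ne hdiff]
        congr 1
        · exact Function.update_comm hdiff _ _ _
        · funext l'; by_cases e1 : l' = l1 <;> by_cases e2 : l' = l2 <;> simp_all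
    | nsync m2 =>
      rw [enabled_nsync, exec_acq hnb] at h2
      simp only [Function.update_of_ne hji] at h2
      obtain ⟨hk2, hm2⟩ := h2
      refine ⟨enabled_nsync.mpr ⟨hk2, hm2⟩, ?_, ?_⟩
      · rw [exec_nsync hnb, enabled_acq]
        simp [Function.update_of_ne hdiff, hk1, hl1]
      · rw [exec_acq hnb, exec_nsync hnb, exec_nsync hnb, exec_acq hnb]
        simp only [Function.update_of_ne hji, Function.update_of_ne hdiff]
        congr 1
        exact Function.update_comm hdiff _ _ _
  | release l1 =>
    rw [enabled_rel] at h1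
    obtain ⟨hk1, hl1⟩ := h1
    cases st2 with
    | exit => exact (enabled_exit_false hnb h2).elim
    | acquire l2 =>
      rw [enabled_acq, exec_rel hnb] at h2
      simp only [Function.update_of_ne hji] at h2
      obtain ⟨hk2, hl2⟩ := h2
      have hll : l2 ≠ l1 := by
        intro h; subst h
        exact hra _ ⟨rfl, rfl⟩
      have hl2' : s.lk l2 = none := by simpa [if_neg hll] using hl2
      refine ⟨enabled_acq.mpr ⟨hk2, hl2'⟩, ?_, ?_⟩
      · rw [exec_acq hnb, enabled_rel]
        simp [Function.update_of_ne hdiff, hk1, hll.symm, hl1]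
      · rw [exec_rel hnb, exec_acq hnb, exec_acq hnb, exec_rel hnb]
        simp only [Function.update_of_ne hji, Function.update_of_ne hdiff]
        congr 1
        · exact Function.update_comm hdiff _ _ _
        · funext l'; by_cases e1 : l' = l1 <;> by_cases e2 : l' = l2 <;> simp_all
    | release l2 =>
      rw [enabled_rel, exec_rel hnb] at h2
      simp only [Function.update_of_ne hji] at h2
      obtain ⟨hk2, hl2⟩ := h2
      have hll : l2 ≠ l1 := by intro h; subst h; simp at hl2
      have hl2' : s.lk l2 = some j := by simpa [if_neg hll] using hl2
      refine ⟨enabled_rel.mpr ⟨hk2, hl2'⟩, ?_, ?_⟩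
      · rw [exec_rel hnb, enabled_rel]
        simp [Function.update_of_ne hdiff, hk1, hll.symm, hl1]
      · rw [exec_rel hnb, exec_rel hnb, exec_rel hnb, exec_rel hnb]
        simp only [Function.update_of_ne hji, Function.update_of_ne hdiff]
        congr 1
        · exact Function.update_comm hdiff _ _ _
        · funext l'; by_cases e1 : l' = l1 <;> by_cases e2 : l' = l2 <;> simp_all
    | nsync m2 =>
      rw [enabled_nsync, exec_rel hnb] at h2
      simp only [Function.update_of_ne hji] at h2
      obtain ⟨hk2, hm2⟩ := h2
      refine ⟨enabled_nsync.mpr ⟨hk2, hm2⟩, ?_, ?_⟩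
      · rw [exec_nsync hnb, enabled_rel]
        simp [Function.update_of_ne hdiff, hk1, hl1]
      · rw [exec_rel hnb, exec_nsync hnb, exec_nsync hnb, exec_rel hnb]
        simp only [Function.update_of_ne hji, Function.update_of_ne hdiff]
        congr 1
        exact Function.update_comm hdiff _ _ _
  | nsync m1 =>
    rw [enabled_nsync] at h1
    obtain ⟨hk1, hm1⟩ := h1
    cases st2 with
    | exit => exact (enabled_exit_false hnb h2).elim
    | acquire l2 =>
      rw [enabled_acq, exec_nsync hnb] at h2
      simp only [Function.update_of_ne hji] at h2
      obtain ⟨hk2, hl2⟩ := h2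
      refine ⟨enabled_acq.mpr ⟨hk2, hl2⟩, ?_, ?_⟩
      · rw [exec_acq hnb, enabled_nsync]
        simp [Function.update_of_ne hdiff, hk1, hm1]
      · rw [exec_nsync hnb, exec_acq hnb, exec_acq hnb, exec_nsync hnb]
        simp only [Function.update_of_ne hji, Function.update_of_ne hdiff]
        congr 1
        exact Function.update_comm hdiff _ _ _
    | release l2 =>
      rw [enabled_rel, exec_nsync hnb] at h2
      simp only [Function.update_of_ne hji] at h2
      obtain ⟨hk2, hl2⟩ := h2
      refine ⟨enabled_rel.mpr ⟨hk2, hl2⟩, ?_, ?_⟩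
      · rw [exec_rel hnb, enabled_nsync]
        simp [Function.update_of_ne hdiff, hk1, hm1]
      · rw [exec_nsync hnb, exec_rel hnb, exec_rel hnb, exec_nsync hnb]
        simp only [Function.update_of_ne hji, Function.update_of_ne hdiff]
        congr 1
        exact Function.update_comm hdiff _ _ _
    | nsync m2 =>
      rw [enabled_nsync, exec_nsync hnb] at h2
      simp only [Function.update_of_ne hji] at h2
      obtain ⟨hk2, hm2⟩ := h2
      have he2 : Enabled s ⟨j, Stmt.nsync m2⟩ := enabled_nsync.mpr ⟨hk2, hm2⟩
      refine ⟨he2, ?_, ?_⟩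
      · rw [exec_nsync hnb, enabled_nsync]
        simp [Function.update_of_ne hdiff, hk1, hm1]
      · exact hC.commute ⟨i, Stmt.nsync m1⟩ ⟨j, Stmt.nsync m2⟩ ⟨m1, rfl⟩ ⟨m2, rfl⟩
          hdiff hnc s (enabled_nsync.mpr ⟨hk1, hm1⟩) he2
lemma exec_append {s sf : GState P} {a b : List (GStmt P)} (h : Exec s (a ++ b) sf) :
    ∃ sm, Exec s a sm ∧ Exec sm b sf := by
  induction a generalizing s with
  | nil => exact ⟨s, Exec.nil s, h⟩
  | cons t l ih =>
    cases h with
    | cons he hx hrest =>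
      obtain ⟨sm, h1, h2⟩ := ih hrest
      exact ⟨sm, Exec.cons he hx h1, h2⟩

lemma exec_glue {s sm sf : GState P} {a b : List (GStmt P)}
    (h1 : Exec s a sm) (h2 : Exec sm b sf) : Exec s (a ++ b) sf := by
  induction h1 with
  | nil => exact h2
  | cons he hx _ ih => exact Exec.cons he hx (ih h2)

lemma exec_noExit (hnb : NoBarriers P) {s sf : GState P} {ts : List (GStmt P)}
    (h : Exec s ts sf) : ∀ k, ¬ stmtIs ts k (·.isExit) := by
  induction h with
  | nil => intro k ⟨t, ht, _⟩; simp at ht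
  | @cons s s' sf t l he hx hrest ih =>
    intro k ⟨u, hu, hex⟩
    cases k with
    | zero =>
      have htu : t = u := by simpa using hu
      subst htu
      obtain ⟨i, st⟩ := t
      have h' : st = Stmt.exit := hex
      subst h'
      exact enabled_exit_false hnb he
    | succ k => exact ih k ⟨u, by simpa using hu, hex⟩

lemma epoch_zero {ts : List (GStmt P)} (hne : ∀ k, ¬ stmtIs ts k (·.isExit)) (k : ℕ) :
    epoch ts k = 0 := by
  have : {m : ℕ | m ≤ k ∧ tidAt ts m = tidAt ts k ∧ stmtIs ts m (·.isExit)} = ∅ := by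
    ext m; simp only [Set.mem_setOf_eq, Set.mem_empty_iff_false, iff_false]
    rintro ⟨-, -, h⟩; exact hne m h
  rw [epoch, this, Set.ncard_empty]

lemma getElem_swap (l1 l2 : List (GStmt P)) (a b : GStmt P) (m : ℕ) :
    (l1 ++ b :: a :: l2)[m]? = (l1 ++ a :: b :: l2)[posSwap l1.length m]? := by
  rcases lt_trichotomy m l1.length with h | h | h
  · rw [List.getElem?_append_left h, posSwap, if_neg (by omega), if_neg (by omega),
      List.getElem?_append_left h]
  · subst h
    rw [posSwap, if_pos rfl, List.getElem?_append_right (le_refl _),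
      List.getElem?_append_right (by omega)]
    simp
  · rcases Nat.eq_or_lt_of_le h with h' | h'
    · rw [posSwap, if_neg (by omega), if_pos (by omega),
        List.getElem?_append_right (by omega), List.getElem?_append_right (by omega), ← h']
      simp
    · have hps : posSwap l1.length m = m := by rw [posSwap, if_neg (by omega), if_neg (by omega)]
      rw [hps, List.getElem?_append_right (by omega), List.getElem?_append_right (by omega)]
      obtain ⟨d, hd⟩ : ∃ d, m - l1.length = d + 2 := ⟨m - l1.length - 2, by omega⟩
      rw [hd]
      simp
lemma stmtIs_eq_of_getElem {ts : List (GStmt P)} {k : ℕ} {a : GStmt P}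
    (ha : ts[k]? = some a) {pr : GStmt P → Prop} (h : stmtIs ts k pr) : pr a := by
  obtain ⟨t, ht, hp⟩ := h
  rw [ha] at ht
  cases ht
  exact hp

lemma hb_swap {ts ts' : List (GStmt P)} {i : ℕ} {a b : GStmt P}
    (ha : ts[i]? = some a) (hb : ts[i+1]? = some b)
    (hlen : ts'.length = ts.length)
    (H : ∀ m, ts'[m]? = ts[posSwap i m]?)
    (hdiff : a.1 ≠ b.1)
    (hE2 : ∀ l, ¬(a.isAcquireOn l ∧ b.isAcquireOn l))
    (hE1 : ∀ l, ¬(a.isAcquireOn l ∧ b.isReleaseOn l))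
    (hE3 : ∀ l, ¬(a.isReleaseOn l ∧ b.isAcquireOn l))
    (hne : ∀ k, ¬ stmtIs ts k (·.isExit))
    {p q : ℕ} (h : HB ts p q) : HB ts' (posSwap i p) (posSwap i q) := by
  have H' : ∀ m, ts'[posSwap i m]? = ts[m]? := by
    intro m; rw [H, posSwap_invol]
  have hstmt : ∀ m pr, stmtIs ts' (posSwap i m) pr ↔ stmtIs ts m pr := by
    intro m pr; unfold stmtIs; rw [H']
  have htid : ∀ m, tidAt ts' (posSwap i m) = tidAt ts m := by
    intro m; unfold tidAt; rw [H']
  have hi1 : i + 1 < ts.length := by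
    by_contra hcon
    rw [List.getElem?_eq_none (le_of_not_gt hcon)] at hb
    exact absurd hb (by simp)
  have hbase : ∀ j k, (IntraThread ts j k ∨ RelAcq ts j k ∨ BarrierRel ts j k) →
      (IntraThread ts' (posSwap i j) (posSwap i k) ∨ RelAcq ts' (posSwap i j) (posSwap i k) ∨
        BarrierRel ts' (posSwap i j) (posSwap i k)) := by
    rintro j k (⟨hjk, hklen, htd⟩ | ⟨l, hjk, hrel, hacq, hmid⟩ | ⟨-, -, hep⟩)
    · left
      have hnotpair : ¬(j = i ∧ k = i + 1) := by
        rintro ⟨rfl, rfl⟩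
        apply hdiff
        have h1 : tidAt ts j = some a.1 := by unfold tidAt; rw [ha]; rfl
        have h2 : tidAt ts (j+1) = some b.1 := by unfold tidAt; rw [hb]; rfl
        rw [h1, h2] at htd
        exact Option.some.inj htd
      exact ⟨posSwap_lt hjk hnotpair, by rw [hlen]; exact posSwap_lt_len hklen hi1,
        by rw [htid, htid]; exact htd⟩
    · right; left
      have hnotpair : ¬(j = i ∧ k = i + 1) := by
        rintro ⟨rfl, rfl⟩
        exact hE3 l ⟨stmtIs_eq_of_getElem ha hrel, stmtIs_eq_of_getElem hb hacq⟩
      refine ⟨l, posSwap_lt hjk hnotpair, (hstmt j _).mpr hrel, (hstmt k _).mpr hacq, ?_⟩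
      intro m hm1 hm2 hcon
      have hcon' : stmtIs ts (posSwap i m) (·.isAcquireOn l) := by
        have h0 := (hstmt (posSwap i m) (·.isAcquireOn l)).mp
        rw [posSwap_invol] at h0
        exact h0 hcon
      rcases lt_trichotomy (posSwap i m) j with hlt | heq | hgt
      · by_cases hp : posSwap i m = i ∧ j = i + 1
        · obtain ⟨e1, e2⟩ := hp
          rw [e1] at hcon'
          exact hE1 l ⟨stmtIs_eq_of_getElem ha hcon', stmtIs_eq_of_getElem hb (e2 ▸ hrel)⟩
        · have h0 := posSwap_lt hlt hp
          rw [posSwap_invol] at h0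
          omega
      · rw [← heq, posSwap_invol] at hm1; omega
      · rcases lt_trichotomy (posSwap i m) k with hlt2 | heq2 | hgt2
        · exact hmid _ hgt hlt2 hcon'
        · rw [← heq2, posSwap_invol] at hm2; omega
        · by_cases hp : k = i ∧ posSwap i m = i + 1
          · obtain ⟨e1, e2⟩ := hp
            rw [e2] at hcon'
            exact hE2 l ⟨stmtIs_eq_of_getElem ha (e1 ▸ hacq), stmtIs_eq_of_getElem hb hcon'⟩
          · have h0 := posSwap_lt hgt2 hp
            rw [posSwap_invol] at h0
            omega
    · exact absurd hep (by rw [epoch_zero hne, epoch_zero hne]; omega)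
  induction h with
  | single hstep => exact Relation.TransGen.single (hbase _ _ hstep)
  | tail _ hstep ih => exact Relation.TransGen.tail ih (hbase _ _ hstep)
lemma eventAt_swap {l1 l2 : List (GStmt P)} {a b : GStmt P} (hdiff : a.1 ≠ b.1) (k : ℕ) :
    eventAt (l1 ++ b :: a :: l2) (posSwap l1.length k) = eventAt (l1 ++ a :: b :: l2) k := by
  have Hg : (l1 ++ b :: a :: l2)[posSwap l1.length k]? = (l1 ++ a :: b :: l2)[k]? := by
    rw [getElem_swap l1 l2 a b, posSwap_invol]
  unfold eventAt
  rw [Hg]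
  cases hk : (l1 ++ a :: b :: l2)[k]? with
  | none => rfl
  | some t =>
    simp only [Option.map_some]
    congr 1
    refine Prod.ext rfl ?_
    simp only
    rcases lt_trichotomy k l1.length with h | h | h
    · rw [posSwap, if_neg (by omega), if_neg (by omega),
        List.take_append, List.take_append]
      have e0 : k + 1 - l1.length = 0 := by omega
      rw [e0]
      simp
    · subst h
      have hta : t = a := by
        rw [List.getElem?_append_right (le_refl _)] at hk
        simpa using hk.symm
      subst hta
      rw [posSwap, if_pos rfl,
        List.take_append, List.take_append]
      have e1 : l1.length + 1 - l1.length = 1 := by omega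
      have e2 : l1.length + 1 + 1 - l1.length = 2 := by omega
      rw [e1, e2, List.take_of_length_le (show l1.length ≤ l1.length + 1 by omega),
        List.take_of_length_le (show l1.length ≤ l1.length + 1 + 1 by omega)]
      have hbt : (decide (b.1 = t.1) : Bool) = false := decide_eq_false (fun e => hdiff e.symm)
      simp [List.countP_append, List.countP_cons, hbt]
    · rcases Nat.eq_or_lt_of_le h with h' | h'
      · have htb : t = b := by
          rw [List.getElem?_append_right (by omega)] at hk
          rw [← h'] at hk
          simpa using hk.symm
        subst htb
        rw [posSwap, if_neg (by omega), if_pos h'.symm,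
          List.take_append, List.take_append]
        have e1 : l1.length + 1 - l1.length = 1 := by omega
        have e2 : k + 1 - l1.length = 2 := by omega
        rw [e1, e2, List.take_of_length_le (show l1.length ≤ l1.length + 1 by omega),
          List.take_of_length_le (show l1.length ≤ k + 1 by omega)]
        have hat : (decide (a.1 = t.1) : Bool) = false := decide_eq_false hdiff
        simp [List.countP_append, List.countP_cons, hat]
      · rw [posSwap, if_neg (by omega), if_neg (by omega),
          List.take_append, List.take_append]
        obtain ⟨d, hd⟩ : ∃ d, k + 1 - l1.length = d + 2 := ⟨k + 1 - l1.length - 2, by omega⟩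
        rw [hd]
        simp only [List.take_succ_cons, List.countP_append, List.countP_cons]
        ring
lemma exec_excl (hnb : NoBarriers P) {s : GState P} {t1 t2 : GStmt P}
    (hdiff : t1.1 ≠ t2.1) (h1 : Enabled s t1) (h2 : Enabled (execute s t1) t2) :
    (∀ l, ¬(t1.isAcquireOn l ∧ t2.isAcquireOn l)) ∧
    (∀ l, ¬(t1.isAcquireOn l ∧ t2.isReleaseOn l)) := by
  obtain ⟨i, st1⟩ := t1; obtain ⟨j, st2⟩ := t2
  replace hdiff : i ≠ j := hdiff
  constructor
  · rintro l ⟨hA, hB⟩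
    have e1 : st1 = Stmt.acquire l := hA
    have e2 : st2 = Stmt.acquire l := hB
    subst e1; subst e2
    rw [enabled_acq, exec_acq hnb] at h2
    simp at h2
  · rintro l ⟨hA, hB⟩
    have e1 : st1 = Stmt.acquire l := hA
    have e2 : st2 = Stmt.release l := hB
    subst e1; subst e2
    rw [enabled_rel, exec_acq hnb] at h2
    simp at h2
    exact hdiff h2.2

theorem stmt3' (P : Program) (hnb : NoBarriers P)
    (C : GStmt P → GStmt P → Prop) (hC : IsConflictRel P C)
    (s0 sn : GState P) (l1 l2 : List (GStmt P)) (t1 t2 : GStmt P)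
    (hexec : Exec s0 (l1 ++ t1 :: t2 :: l2) sn)
    (hhb : ¬ HB (l1 ++ t1 :: t2 :: l2) l1.length (l1.length + 1))
    (hnc : ¬ C t1 t2) :
    Exec s0 (l1 ++ t2 :: t1 :: l2) sn ∧
    events (l1 ++ t1 :: t2 :: l2) = events (l1 ++ t2 :: t1 :: l2) ∧
    (∀ p q, HB (l1 ++ t1 :: t2 :: l2) p q ↔
      HB (l1 ++ t2 :: t1 :: l2) (posSwap l1.length p) (posSwap l1.length q)) ∧
    (∀ p q, Races C (l1 ++ t1 :: t2 :: l2) p q ↔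
      Races C (l1 ++ t2 :: t1 :: l2) (posSwap l1.length p) (posSwap l1.length q)) := by
  set i := l1.length with hi
  set ts := l1 ++ t1 :: t2 :: l2 with hts
  set ts' := l1 ++ t2 :: t1 :: l2 with hts'
  have hgt1 : ts[i]? = some t1 := by
    rw [hts, List.getElem?_append_right (le_refl _)]; simp
  have hgt2 : ts[i+1]? = some t2 := by
    rw [hts, List.getElem?_append_right (by omega)]
    have : i + 1 - l1.length = 1 := by omega
    rw [this]; simp
  have hgt1' : ts'[i]? = some t2 := by
    rw [hts', List.getElem?_append_right (le_refl _)]; simp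
  have hgt2' : ts'[i+1]? = some t1 := by
    rw [hts', List.getElem?_append_right (by omega)]
    have : i + 1 - l1.length = 1 := by omega
    rw [this]; simp
  have hlen : ts'.length = ts.length := by rw [hts, hts']; simp
  have H : ∀ m, ts'[m]? = ts[posSwap i m]? := getElem_swap l1 l2 t1 t2
  have H2 : ∀ m, ts[m]? = ts'[posSwap i m]? := getElem_swap l1 l2 t2 t1
  have Hinv : ∀ m, ts'[posSwap i m]? = ts[m]? := by
    intro m; rw [H, posSwap_invol]
  have hi1 : i + 1 < ts.length := by rw [hts]; simp only [List.length_append, List.length_cons]; omega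
  have hdiff : t1.1 ≠ t2.1 := by
    intro h
    apply hhb
    refine Relation.TransGen.single (Or.inl ⟨Nat.lt_succ_self _, hi1, ?_⟩)
    unfold tidAt; rw [hgt1, hgt2]; simp [h]
  have hE3 : ∀ l, ¬(t1.isReleaseOn l ∧ t2.isAcquireOn l) := by
    rintro l ⟨ha1, ha2⟩
    apply hhb
    exact Relation.TransGen.single (Or.inr (Or.inl
      ⟨l, Nat.lt_succ_self _, ⟨t1, hgt1, ha1⟩, ⟨t2, hgt2, ha2⟩,
        fun m hm1 hm2 _ => by omega⟩))
  -- decompose the execution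
  obtain ⟨sm, hex1, hex2⟩ := exec_append hexec
  cases hex2 with
  | cons he1 hx1 rest =>
    cases rest with
    | cons he2 hx2 hrest =>
      rename_i s' s''
      rw [← hx1] at he2
      obtain ⟨hE2, hE1⟩ := exec_excl hnb hdiff he1 he2
      obtain ⟨hen2, hen1, hcomm⟩ := swap_step hnb hC hdiff hnc hE3 he1 he2
      have hx3 : execute (execute sm t2) t1 = s'' := by rw [← hcomm, hx1, hx2]
      have hexec' : Exec s0 ts' sn :=
        exec_glue hex1 (Exec.cons hen2 rfl (Exec.cons hen1 hx3 hrest))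
      have hne : ∀ k, ¬ stmtIs ts k (·.isExit) := exec_noExit hnb hexec
      have hne' : ∀ k, ¬ stmtIs ts' k (·.isExit) := exec_noExit hnb hexec'
      have hHB : ∀ p q, HB ts p q ↔ HB ts' (posSwap i p) (posSwap i q) := by
        intro p q
        constructor
        · exact hb_swap hgt1 hgt2 hlen H hdiff hE2 hE1 hE3 hne
        · intro h
          have := hb_swap hgt1' hgt2' hlen.symm H2 hdiff.symm
            (fun l hl => hE2 l ⟨hl.2, hl.1⟩) (fun l hl => hE3 l ⟨hl.2, hl.1⟩)
            (fun l hl => hE1 l ⟨hl.2, hl.1⟩) hne' h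
          rwa [posSwap_invol, posSwap_invol] at this
      refine ⟨hexec', ?_, hHB, ?_⟩
      · ext e
        simp only [events, Set.mem_setOf_eq]
        constructor
        · rintro ⟨k, hk⟩
          exact ⟨posSwap i k, by rw [eventAt_swap hdiff k]; exact hk⟩
        · rintro ⟨k, hk⟩
          exact ⟨posSwap i k, by rw [eventAt_swap hdiff.symm k]; exact hk⟩
      · intro p q
        unfold Races
        constructor
        · rintro ⟨⟨u, v, hu, hv, hc⟩, hn1, hn2⟩
          exact ⟨⟨u, v, by rw [Hinv p]; exact hu, by rw [Hinv q]; exact hv, hc⟩,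
            fun h => hn1 ((hHB p q).mpr h), fun h => hn2 ((hHB q p).mpr h)⟩
        · rintro ⟨⟨u, v, hu, hv, hc⟩, hn1, hn2⟩
          rw [Hinv p] at hu; rw [Hinv q] at hv
          exact ⟨⟨u, v, hu, hv, hc⟩, fun h => hn1 ((hHB p q).mp h),
            fun h => hn2 ((hHB q p).mp h)⟩

/-- Commutation lemma: adjacent HB-unordered, non-conflicting transitions can be
transposed, preserving events, happens-before, and the data race relation. -/
theorem stmt3 (P : Program) (hnb : NoBarriers P)
    (C : GStmt P → GStmt P → Prop) (hC : IsConflictRel P C)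
    (s0 sn : GState P) (l1 l2 : List (GStmt P)) (t1 t2 : GStmt P)
    (hexec : Exec s0 (l1 ++ t1 :: t2 :: l2) sn)
    (hhb : ¬ HB (l1 ++ t1 :: t2 :: l2) l1.length (l1.length + 1))
    (hnc : ¬ C t1 t2) :
    Exec s0 (l1 ++ t2 :: t1 :: l2) sn ∧
    events (l1 ++ t1 :: t2 :: l2) = events (l1 ++ t2 :: t1 :: l2) ∧
    (∀ p q, HB (l1 ++ t1 :: t2 :: l2) p q ↔
      HB (l1 ++ t2 :: t1 :: l2) (posSwap l1.length p) (posSwap l1.length q)) ∧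
    (∀ p q, Races C (l1 ++ t1 :: t2 :: l2) p q ↔
      Races C (l1 ++ t2 :: t1 :: l2) (posSwap l1.length p) (posSwap l1.length q)) := by
  exact stmt3' P hnb C hC s0 sn l1 l2 t1 t2 hexec hhb hnc

end MC
end

section
/- Let α = (s0 →t1 ⋯ →tn sn) be a finite execution, 1 ≤ i ≤ n−1, and suppose t_i and t_{i+1} are conflicting nsync statements from different threads. Then there exist states s', s'' such that α' = (s0 →t1 ⋯ →t_{i−1} s_{i−1} →t_{i+1} s' →t_i s'') is an execution, and α' contains a data race. -/
namespace MC

variable {P : Program}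

/-! ### Auxiliary lemmas for stmt4 -/

lemma exec_append_split {s0 sf : GState P} {a b : List (GStmt P)}
    (h : Exec s0 (a ++ b) sf) : ∃ s, Exec s0 a s ∧ Exec s b sf := by
  induction a generalizing s0 with
  | nil => exact ⟨s0, Exec.nil s0, h⟩
  | cons t a ih =>
    cases h with
    | cons hen hex hrest =>
      obtain ⟨s, h1, h2⟩ := ih hrest
      exact ⟨s, Exec.cons hen hex h1, h2⟩

lemma exec_append_join {a : List (GStmt P)} :
    ∀ {s0 s sf : GState P} {b : List (GStmt P)},
      Exec s0 a s → Exec s b sf → Exec s0 (a ++ b) sf := by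
  induction a with
  | nil =>
    intro s0 s sf b h1 h2
    cases h1
    exact h2
  | cons t a ih =>
    intro s0 s sf b h1 h2
    cases h1 with
    | cons hen hex hrest => exact Exec.cons hen hex (ih hrest h2)

lemma exec_enabled_of_mem {s0 sf : GState P} {ts : List (GStmt P)}
    (h : Exec s0 ts sf) : ∀ t ∈ ts, ∃ s, Enabled s t := by
  induction h with
  | nil => simp
  | cons hen _ _ ih =>
    intro t ht
    rcases List.mem_cons.mp ht with rfl | ht
    · exact ⟨_, hen⟩
    · exact ih t ht

lemma not_exit_of_enabled (hnb : NoBarriers P) {s : GState P} {t : GStmt P}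
    (h : Enabled s t) : ¬ t.isExit := by
  obtain ⟨i, st⟩ := t
  intro hex
  have hst : st = Stmt.exit := hex
  subst hst
  have hk := hnb i (s.loc i)
  simp only [Enabled] at h
  revert h hk
  generalize P.kind i (s.loc i) = k
  cases k <;> intro h hk <;> simp_all

lemma enabled_nsync_congr {s s' : GState P} {t : GStmt P}
    (hn : t.isNsync) (h : s.loc t.1 = s'.loc t.1) :
    Enabled s t → Enabled s' t := by
  obtain ⟨i, st⟩ := t
  cases st with
  | nsync m =>
    simp only at h
    intro he
    simp only [Enabled] at he ⊢
    rw [show s'.loc i = s.loc i from h.symm]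
    revert he
    generalize P.kind i (s.loc i) = k
    cases k <;> intro he <;> exact he
  | acquire l => obtain ⟨m, hm⟩ := hn; exact absurd hm (by simp)
  | release l => obtain ⟨m, hm⟩ := hn; exact absurd hm (by simp)
  | exit => obtain ⟨m, hm⟩ := hn; exact absurd hm (by simp)

lemma execute_loc_ne {s : GState P} {t : GStmt P} {j : Fin P.n}
    (h : j ≠ t.1) : (execute s t).loc j = s.loc j := by
  obtain ⟨i, st⟩ := t
  cases st <;> exact Function.update_of_ne h _ _

/-- Transposing adjacent conflicting nsync statements of different threads and
truncating yields an execution containing a data race. -/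
theorem stmt4 (P : Program) (hnb : NoBarriers P)
    (C : GStmt P → GStmt P → Prop) (hC : IsConflictRel P C)
    (s0 sn : GState P) (l1 l2 : List (GStmt P)) (t1 t2 : GStmt P)
    (h1 : t1.isNsync) (h2 : t2.isNsync) (hne : t1.1 ≠ t2.1) (hc : C t1 t2)
    (hexec : Exec s0 (l1 ++ t1 :: t2 :: l2) sn) :
    ∃ s'', Exec s0 (l1 ++ [t2, t1]) s'' ∧ HasRace C (l1 ++ [t2, t1]) := by
  obtain ⟨s, hl1, hrest⟩ := exec_append_split hexec
  cases hrest with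
  | cons hen1 hex1 hrest2 =>
    cases hrest2 with
    | cons hen2 hex2 _ =>
      subst hex1 hex2
      have hen2' : Enabled s t2 :=
        enabled_nsync_congr h2 (execute_loc_ne hne.symm) hen2
      have hen1' : Enabled (execute s t2) t1 :=
        enabled_nsync_congr h1 (execute_loc_ne hne).symm hen1
      have hnew : Exec s0 (l1 ++ [t2, t1]) (execute (execute s t2) t1) :=
        exec_append_join hl1
          (Exec.cons hen2' rfl (Exec.cons hen1' rfl (Exec.nil _)))
      refine ⟨_, hnew, ?_⟩
      set ts := l1 ++ [t2, t1] with hts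
      have hget1 : ts[l1.length]? = some t2 := by
        rw [hts, List.getElem?_append_right (le_refl _)]
        simp
      have hget2 : ts[l1.length + 1]? = some t1 := by
        rw [hts, List.getElem?_append_right (by omega)]
        simp
      have hnoexit : ∀ m, ¬ stmtIs ts m (·.isExit) := by
        rintro m ⟨t, htm, hexit⟩
        have hmem : t ∈ ts := by
          obtain ⟨hlt, rfl⟩ := List.getElem?_eq_some_iff.mp htm
          exact List.getElem_mem hlt
        obtain ⟨s', hs'⟩ := exec_enabled_of_mem hnew t hmem
        exact not_exit_of_enabled hnb hs' hexit
      have hbr : ∀ j k, ¬ BarrierRel ts j k := by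
        have hep : ∀ j, epoch ts j = 0 := by
          intro j
          unfold epoch
          convert Set.ncard_empty ℕ using 2
          ext m
          simp only [Set.mem_setOf_eq, Set.mem_empty_iff_false, iff_false]
          rintro ⟨-, -, hst⟩
          exact hnoexit m hst
        rintro j k ⟨-, -, hlt⟩
        rw [hep, hep] at hlt
        exact lt_irrefl 0 hlt
      have hstep : ∀ j k,
          (IntraThread ts j k ∨ RelAcq ts j k ∨ BarrierRel ts j k) → j < k := by
        rintro j k (⟨h, -, -⟩ | ⟨l, h, -, -, -⟩ | hb)
        · exact h
        · exact h
        · exact absurd hb (hbr j k)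
      have hblt : ∀ j k, HB ts j k → j < k := by
        intro j k h
        induction h with
        | single hs => exact hstep _ _ hs
        | tail _ hs ih => exact ih.trans (hstep _ _ hs)
      have hbase : ¬ (IntraThread ts l1.length (l1.length + 1) ∨
          RelAcq ts l1.length (l1.length + 1) ∨
          BarrierRel ts l1.length (l1.length + 1)) := by
        rintro (⟨-, -, htid⟩ | ⟨l, -, ⟨tr, htr, hrel⟩, -, -⟩ | hb)
        · unfold tidAt at htid
          rw [hget1, hget2] at htid
          simp only [Option.map_some] at htid
          exact hne.symm (Option.some.inj htid)
        · rw [hget1] at htr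
          obtain rfl := Option.some.inj htr
          obtain ⟨m, hm⟩ := h2
          unfold GStmt.isReleaseOn at hrel
          rw [hm] at hrel
          cases hrel
        · exact hbr _ _ hb
      refine ⟨l1.length, l1.length + 1,
        ⟨t2, t1, hget1, hget2, hC.symm _ _ hc⟩, ?_, ?_⟩
      · intro h
        cases h with
        | single hs => exact hbase hs
        | tail h1 hs =>
          have hb1 := hblt _ _ h1
          have hb2 := hstep _ _ hs
          omega
      · intro h
        have := hblt _ _ h
        omega

end MC
end

section
/- In the race-detecting state graph of a barrier-free program, any infinite path that visits only finitely many nodes contains a node at which no thread is normal (where thread i is normal at a node if its local state is not in R_i and it has an enabled statement). -/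
namespace MC

variable {P : Program}

/-- Any infinite path in the race-detecting state graph visiting finitely many
nodes contains a node at which no thread is normal. -/
theorem stmt5 (P : Program) (hnb : NoBarriers P) (RS : RSets P)
    (f : ℕ → RNode P) (g : ℕ → GStmt P)
    (hpath : ∀ k, REdge RS (f k) (g k) (f (k+1)))
    (hfin : (Set.range f).Finite) :
    ∃ k, ∀ i, ¬ Normal RS (f k).st i := by
  by_contra h
  push_neg at h
  -- every step's mover is normal at its source node
  have hmov : ∀ m, Normal RS (f m).st (g m).1 :=
    fun m => ((hpath m).2.2.2.2.2 (h m)).1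
  -- per-step: the mover's local state takes a local step, source outside R
  have key : ∀ m, ((f m).st.loc (g m).1 ∉ RS.R (g m).1) ∧
      isLocalStep (g m).1 ((f m).st.loc (g m).1) ((f (m+1)).st.loc (g m).1) := by
    intro m
    have henb : Enabled (f m).st (g m) := (hpath m).1
    have hex := (hpath m).2.1
    have hR : (f m).st.loc (g m).1 ∉ RS.R (g m).1 := (hmov m).1
    refine ⟨hR, ?_⟩
    rcases hg : g m with ⟨j, st⟩
    rw [hg] at henb hex hR
    dsimp only at henb hex hR ⊢
    rcases hk : P.kind j ((f m).st.loc j) with l | l | _ | _ | _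
    · exact absurd (RS.acq_mem j _ l hk) hR
    · exact absurd (RS.rel_mem j _ l hk) hR
    · exact absurd hk (hnb j _)
    · cases st with
      | acquire l' => simp [Enabled, hk] at henb
      | release l' => simp [Enabled, hk] at henb
      | exit => simp [Enabled, hk] at henb
      | nsync mm =>
        have hmem : mm ∈ P.stmts j ((f m).st.loc j) := by
          simpa [Enabled, hk] using henb
        rw [hex]
        unfold isLocalStep
        rw [hk]
        refine ⟨mm, (f m).st.sh, hmem, ?_⟩
        simp [execute]
    · exfalso
      cases st <;> simp [Enabled, hk] at henb
  -- other threads' local states are unchanged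
  have frozen : ∀ m j, j ≠ (g m).1 → (f (m+1)).st.loc j = (f m).st.loc j := by
    intro m j hne
    have hex := (hpath m).2.1
    rw [hex]
    rcases hg : g m with ⟨a, st⟩
    rw [hg] at hne
    have hne' : j ≠ a := hne
    cases st <;> simp [execute, Function.update_of_ne hne']
  -- the path revisits a node
  obtain ⟨k, k', hlt, hfeq⟩ : ∃ a b, a < b ∧ f a = f b := by
    have hfi : ¬ Function.Injective f := by
      intro hinj
      exact Set.infinite_range_of_injective hinj hfin
    simp only [Function.Injective, not_forall] at hfi
    obtain ⟨a, b, hab, hne⟩ := hfi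
    rcases lt_or_gt_of_ne hne with h1 | h1
    · exact ⟨a, b, h1, hab⟩
    · exact ⟨b, a, h1, hab.symm⟩
  set i : Fin P.n := (g k).1 with hi
  set S : P.Local i → P.Local i → Prop :=
    fun a b => a ∉ RS.R i ∧ isLocalStep i a b with hS
  -- chain the local steps of thread i along the cycle
  have hchain : ∀ d, k + 1 + d ≤ k' →
      Relation.ReflTransGen S ((f (k+1)).st.loc i) ((f (k+1+d)).st.loc i) := by
    intro d
    induction d with
    | zero => intro _; exact Relation.ReflTransGen.refl
    | succ d ih =>
      intro hd
      have hih := ih (by omega)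
      have : k + 1 + (d + 1) = (k + 1 + d) + 1 := by omega
      rw [this]
      by_cases hc : (g (k+1+d)).1 = i
      · have hkm := key (k+1+d)
        rw [hc] at hkm
        exact Relation.ReflTransGen.tail hih ⟨hkm.1, hkm.2⟩
      · rw [frozen (k+1+d) i (fun hh => hc hh.symm)]
        exact hih
  have h1 : S ((f k).st.loc i) ((f (k+1)).st.loc i) := ⟨(key k).1, (key k).2⟩
  have h2 : Relation.ReflTransGen S ((f (k+1)).st.loc i) ((f k').st.loc i) := by
    have := hchain (k' - (k+1)) (by omega)
    rwa [show k + 1 + (k' - (k+1)) = k' from by omega] at this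
  have hT : Relation.TransGen S ((f k).st.loc i) ((f k).st.loc i) := by
    have := Relation.TransGen.head' h1 h2
    rwa [← hfeq] at this
  -- strengthen to the relation in the acyclicity hypothesis
  have conv : ∀ a b : P.Local i, Relation.TransGen S a b → b ∉ RS.R i →
      Relation.TransGen (fun a b => a ∉ RS.R i ∧ b ∉ RS.R i ∧ isLocalStep i a b) a b := by
    intro a b hab
    induction hab with
    | single hs => intro hb; exact Relation.TransGen.single ⟨hs.1, hb, hs.2⟩
    | tail _ hs ih => intro hc; exact Relation.TransGen.tail (ih hs.1) ⟨hs.1, hc, hs.2⟩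
  exact RS.acyclic i ((f k).st.loc i) (hmov k).1 (conv _ _ hT (hmov k).1)

end MC
end

section
/- The race-detecting state graph of a barrier-free program, with state map state(⟨s,a⟩) = s, is a dense state graph: (1) every node with an enabled statement has a nonempty ample set; (2) ample sets are closed under same-thread enabled statements; (3) if the ample set is a proper subset of the enabled statements, all ample statements are nsync; (4) every cycle contains a fully-enabled node. -/
namespace MC

variable {P : Program}

open Classical in
/-- Target node of an edge labelled `t` from `u`. -/
noncomputable def mkNode (RS : RSets P) (u : RNode P) (t : GStmt P) : RNode P :=
  { st := execute u.st t
    hist := Function.update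
      (fun i => if t.isExitZero then (∅ : Set (P.NStmt i)) else u.hist i) t.1
      (if h : ∃ m, t.2 = Stmt.nsync m then insert h.choose (u.hist t.1)
       else if t.isExitZero ∨ u.st.loc t.1 ∈ RS.R t.1 then (∅ : Set (P.NStmt t.1))
            else u.hist t.1) }

lemma mkEdge (RS : RSets P) (u : RNode P) (t : GStmt P) (he : Enabled u.st t)
    (hc : (∃ i, Normal RS u.st i) →
      Normal RS u.st t.1 ∧ ∀ j, Normal RS u.st j → t.1 ≤ j) :
    REdge RS u t (mkNode RS u t) := by
  classical
  refine ⟨he, rfl, ?_, ?_, ?_, hc⟩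
  · intro m hm
    have h : ∃ m', t.2 = Stmt.nsync m' := ⟨m, hm⟩
    have hch : h.choose = m := by
      exact Stmt.nsync.inj (h.choose_spec.symm.trans hm)
    simp [mkNode, Function.update_self, dif_pos h, hch]
  · intro hns
    have h : ¬ ∃ m', t.2 = Stmt.nsync m' := hns
    constructor
    · intro hcond
      simp [mkNode, Function.update_self, dif_neg h, if_pos hcond]
    · intro hcond
      simp [mkNode, Function.update_self, dif_neg h, if_neg hcond]
  · intro i hi
    constructor
    · intro hez
      simp [mkNode, Function.update_of_ne hi, if_pos hez]
    · intro hez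
      simp [mkNode, Function.update_of_ne hi, if_neg hez]

/-- At a state where thread `i` is outside `R i`, any enabled statement of `i`
is an nsync statement (assuming no barriers). -/
lemma classify (hnb : NoBarriers P) {RS : RSets P} {s : GState P} {i : Fin P.n}
    {st : Stmt P.Lock (P.NStmt i)} (hn : s.loc i ∉ RS.R i)
    (he : Enabled s ⟨i, st⟩) :
    ∃ m, st = Stmt.nsync m ∧ P.kind i (s.loc i) = LKind.nsync ∧
      m ∈ P.stmts i (s.loc i) := by
  cases hk : P.kind i (s.loc i) with
  | acquire l => exact absurd (RS.acq_mem i _ l hk) hn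
  | release l => exact absurd (RS.rel_mem i _ l hk) hn
  | barrier => exact absurd hk (hnb i _)
  | term => cases st <;> simp [Enabled, hk] at he
  | nsync =>
      cases st with
      | nsync m =>
          refine ⟨m, rfl, rfl, ?_⟩
          simpa [Enabled, hk] using he
      | acquire l => simp [Enabled, hk] at he
      | release l => simp [Enabled, hk] at he
      | exit => simp [Enabled, hk] at he

lemma strengthen {RS : RSets P} {i : Fin P.n} {a b : P.Local i}
    (h : Relation.TransGen (fun x y => x ∉ RS.R i ∧ isLocalStep i x y) a b)
    (hb : b ∉ RS.R i) :
    Relation.TransGen (fun x y => x ∉ RS.R i ∧ y ∉ RS.R i ∧ isLocalStep i x y) a b := by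
  induction h with
  | single h => exact .single ⟨h.1, hb, h.2⟩
  | tail h1 h2 ih => exact .tail (ih h2.1) ⟨h2.1, hb, h2.2⟩

lemma edge_step (hnb : NoBarriers P) {RS : RSets P} {u v : RNode P}
    {t : GStmt P} (e : REdge RS u t v) (hnu : ∃ j, Normal RS u.st j) :
    (u.st.loc t.1 ∉ RS.R t.1 ∧ isLocalStep t.1 (u.st.loc t.1) (v.st.loc t.1)) ∧
      ∀ i, i ≠ t.1 → v.st.loc i = u.st.loc i := by
  obtain ⟨i0, st⟩ := t
  have hn : Normal RS u.st i0 := (e.2.2.2.2.2 hnu).1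
  obtain ⟨m, rfl, hk, hm⟩ := classify hnb hn.1 e.1
  have hv : v.st = execute u.st ⟨i0, Stmt.nsync m⟩ := e.2.1
  have hloc : v.st.loc = Function.update u.st.loc i0
      (P.update i0 (u.st.loc i0) m u.st.sh).1 := by
    rw [hv]; rfl
  refine ⟨⟨hn.1, ?_⟩, ?_⟩
  · simp only [isLocalStep, hk]
    exact ⟨m, u.st.sh, hm, by rw [hloc, Function.update_self]⟩
  · intro i hi
    rw [hloc, Function.update_of_ne hi]

lemma pathLoc (hnb : NoBarriers P) {RS : RSets P} {l : List (GStmt P)}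
    {u w : RNode P} (hp : RPath RS u l w) :
    (∀ v' l1 l2, l = l1 ++ l2 → l2 ≠ [] → RPath RS u l1 v' → ∃ j, Normal RS v'.st j) →
    ∀ i, Relation.ReflTransGen (fun a b => a ∉ RS.R i ∧ isLocalStep i a b)
      (u.st.loc i) (w.st.loc i) := by
  induction hp with
  | nil u => intro _ i; exact .refl
  | @cons u v w t l e hp ih =>
      intro hall i
      have hnu : ∃ j, Normal RS u.st j :=
        hall u [] (t :: l) rfl (by simp) (RPath.nil u)
      have hall' : ∀ v' l1 l2, l = l1 ++ l2 → l2 ≠ [] → RPath RS v l1 v' →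
          ∃ j, Normal RS v'.st j := by
        intro v' l1 l2 hsp hne hp1
        exact hall v' (t :: l1) l2 (by rw [hsp]; rfl) hne (RPath.cons e hp1)
      have hstep := edge_step hnb e hnu
      by_cases hi : i = t.1
      · subst hi
        exact Relation.ReflTransGen.head hstep.1 (ih hall' t.1)
      · rw [← hstep.2 i hi]
        exact ih hall' i

/-- The race-detecting state graph of a barrier-free program is a dense state graph. -/
theorem stmt6 (P : Program) (hnb : NoBarriers P) (RS : RSets P) :
    (∀ u : RNode P, (∃ t, Enabled u.st t) → ∃ t v, REdge RS u t v) ∧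
    (∀ (u : RNode P) (t t' : GStmt P), (∃ v, REdge RS u t v) →
      Enabled u.st t' → t'.1 = t.1 → ∃ v, REdge RS u t' v) ∧
    (∀ u : RNode P, {t | ∃ v, REdge RS u t v} ≠ {t | Enabled u.st t} →
      ∀ t : GStmt P, (∃ v, REdge RS u t v) → t.isNsync) ∧
    (∀ (u : RNode P) (l : List (GStmt P)), l ≠ [] → RPath RS u l u →
      ∃ v l1 l2, l = l1 ++ l2 ∧ RPath RS u l1 v ∧
        {t | ∃ w, REdge RS v t w} = {t | Enabled v.st t}) := by
  classical
  refine ⟨?_, ?_, ?_, ?_⟩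
  · -- (1) nonempty ample sets
    intro u ⟨t, ht⟩
    by_cases hex : ∃ i, Normal RS u.st i
    · obtain ⟨i0, hi0, hmin⟩ := Set.exists_min_image {i | Normal RS u.st i} id
        (Set.toFinite _) hex
      obtain ⟨st, hst⟩ := hi0.2
      exact ⟨⟨i0, st⟩, _, mkEdge RS u ⟨i0, st⟩ hst (fun _ => ⟨hi0, hmin⟩)⟩
    · exact ⟨t, _, mkEdge RS u t ht (fun h => absurd h hex)⟩
  · -- (2) closure under same-thread statements
    intro u t t' ⟨v, e⟩ he' htt
    refine ⟨_, mkEdge RS u t' he' ?_⟩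
    rw [htt]
    exact e.2.2.2.2.2
  · -- (3) proper ample sets contain only nsync statements
    intro u hne t ⟨v, e⟩
    have hex : ∃ i, Normal RS u.st i := by
      by_contra hno
      apply hne
      ext t'
      simp only [Set.mem_setOf_eq]
      constructor
      · rintro ⟨w, ew⟩; exact ew.1
      · intro het'
        exact ⟨_, mkEdge RS u t' het' (fun h => absurd h hno)⟩
    have hn : Normal RS u.st t.1 := (e.2.2.2.2.2 hex).1
    obtain ⟨i0, st⟩ := t
    obtain ⟨m, hm, _, _⟩ := classify hnb hn.1 e.1
    exact ⟨m, hm⟩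
  · -- (4) every cycle contains a fully-enabled node
    intro u l hne hcyc
    by_cases hex : ∃ l1 v, (∃ l2, l = l1 ++ l2) ∧ RPath RS u l1 v ∧
        ∀ j, ¬ Normal RS v.st j
    · obtain ⟨l1, v, ⟨l2, hl⟩, hp1, hnorm⟩ := hex
      refine ⟨v, l1, l2, hl, hp1, ?_⟩
      ext t
      simp only [Set.mem_setOf_eq]
      constructor
      · rintro ⟨w, ew⟩; exact ew.1
      · intro het
        exact ⟨_, mkEdge RS v t het (fun ⟨j, hj⟩ => absurd hj (hnorm j))⟩
    · exfalso
      push_neg at hex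
      cases l with
      | nil => exact hne rfl
      | cons t l' =>
        cases hcyc with
        | @cons _ v _ _ _ e hp' =>
          have hall : ∀ v' l1 l2, t :: l' = l1 ++ l2 → l2 ≠ [] →
              RPath RS u l1 v' → ∃ j, Normal RS v'.st j := by
            intro v' l1 l2 hsp _ hp1
            obtain ⟨j, hj⟩ := hex l1 v' ⟨l2, hsp⟩ hp1
            exact ⟨j, hj⟩
          have hnu : ∃ j, Normal RS u.st j :=
            hall u [] (t :: l') rfl (by simp) (RPath.nil u)
          have hn : Normal RS u.st t.1 := (e.2.2.2.2.2 hnu).1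
          have hstep := edge_step hnb e hnu
          have hall' : ∀ v' l1 l2, l' = l1 ++ l2 → l2 ≠ [] → RPath RS v l1 v' →
              ∃ j, Normal RS v'.st j := by
            intro v' l1 l2 hsp hne2 hp1
            exact hall v' (t :: l1) l2 (by rw [hsp]; rfl) hne2 (RPath.cons e hp1)
          have rest := pathLoc hnb hp' hall' t.1
          have tg : Relation.TransGen
              (fun a b => a ∉ RS.R t.1 ∧ isLocalStep t.1 a b)
              (u.st.loc t.1) (u.st.loc t.1) :=
            Relation.TransGen.head' hstep.1 rest
          exact RS.acyclic t.1 (u.st.loc t.1) hn.1 (strengthen tg hn.1)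

end MC
end

section
/- In the block decomposition of a finite path in the race-detecting state graph of a barrier-free program: every block has length at least one and all its statements come from the same thread; the path is the concatenation of its blocks; every lock statement is the first statement of some block; all non-first statements in a block are nsync; and if block B_{i+1} is initial then B_i is initial and tid(B_i) < tid(B_{i+1}). -/
namespace MC

variable {P : Program}

lemma loc_execute_of_ne (s : GState P) (t : GStmt P) {i : Fin P.n} (h : i ≠ t.1) :
    (execute s t).loc i = s.loc i :=
  Function.update_of_ne h _ _

lemma NoBarriers.kind_of_not_mem_R (hnb : NoBarriers P) (RS : RSets P) {i : Fin P.n}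
    {σ : P.Local i} (hσ : σ ∉ RS.R i) :
    P.kind i σ = .nsync ∨ P.kind i σ = .term := by
  rcases hk : P.kind i σ with l | l | _ | _ | _
  · exact absurd (RS.acq_mem i σ l hk) hσ
  · exact absurd (RS.rel_mem i σ l hk) hσ
  · exact absurd hk (hnb i σ)
  · exact .inl rfl
  · exact .inr rfl

lemma Enabled.isNsync_of_not_mem_R (hnb : NoBarriers P) (RS : RSets P) {s : GState P}
    {t : GStmt P} (hen : Enabled s t) (hR : s.loc t.1 ∉ RS.R t.1) : t.isNsync := by
  obtain ⟨i, st⟩ := t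
  rcases hnb.kind_of_not_mem_R RS hR with hk | hk <;>
    rcases st with _ | _ | _ | m <;> simp only [Enabled, hk] at hen
  exact ⟨m, rfl⟩

lemma Normal.of_loc_eq (hnb : NoBarriers P) {RS : RSets P} {s s' : GState P} {i : Fin P.n}
    (hn : Normal RS s i) (hl : s'.loc i = s.loc i) : Normal RS s' i := by
  obtain ⟨hR, st, hen⟩ := hn
  refine ⟨hl ▸ hR, st, ?_⟩
  rcases hnb.kind_of_not_mem_R RS hR with hk | hk <;>
    rcases st with _ | _ | _ | m <;> simp only [Enabled, hl, hk] at hen ⊢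
  exact hen

lemma tidAt_of_lt {ts : List (GStmt P)} {m : ℕ} (hm : m < ts.length) :
    tidAt ts m = some ts[m].1 := by
  simp [tidAt, hm]

lemma IsPathFn.rEdge {RS : RSets P} {f : ℕ → RNode P} {ts : List (GStmt P)}
    (hpath : IsPathFn RS f ts) {k : ℕ} (hk : k < ts.length) :
    REdge RS (f k) ts[k] (f (k+1)) := by
  simpa using hpath k hk

lemma IsPathFn.loc_eq_of_tidAt_ne {RS : RSets P} {f : ℕ → RNode P} {ts : List (GStmt P)}
    (hpath : IsPathFn RS f ts) {i : Fin P.n} {a b : ℕ} (hab : a ≤ b) (hb : b ≤ ts.length)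
    (hne : ∀ m, a ≤ m → m < b → tidAt ts m ≠ some i) :
    (f b).st.loc i = (f a).st.loc i := by
  induction b, hab using Nat.le_induction with
  | base => rfl
  | succ b hab ih =>
    have hb' : b < ts.length := by omega
    have hi : i ≠ ts[b].1 := fun h => hne b hab (by omega) (by rw [tidAt_of_lt hb', h])
    rw [(hpath.rEdge hb').2.1, loc_execute_of_ne _ _ hi]
    exact ih (by omega) fun m h1 h2 => hne m h1 (by omega)

lemma flatten_map_range_drop_take {α : Type*} (ts : List α) {c : ℕ → ℕ} (h0 : c 0 = 0)
    (N : ℕ) (hmono : ∀ j, j < N → c j ≤ c (j+1)) :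
    ((List.range N).map fun j => (ts.drop (c j)).take (c (j+1) - c j)).flatten =
      ts.take (c N) := by
  induction N with
  | zero => simp [h0]
  | succ N ih =>
    rw [List.range_succ, List.map_append, List.flatten_append, ih fun j hj => hmono j (by omega),
      List.map_singleton, List.flatten_singleton, ← List.take_add,
      Nat.add_sub_cancel' (hmono N (by omega))]

lemma exists_le_lt_succ_of_le_of_lt {c : ℕ → ℕ} {m : ℕ} (h0 : c 0 ≤ m) :
    ∀ {N : ℕ}, m < c N → ∃ j, j < N ∧ c j ≤ m ∧ m < c (j+1)
  | 0, hN => absurd h0 (by omega)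
  | N + 1, hN => by
    by_cases hm : m < c N
    · obtain ⟨j, hj, h⟩ := exists_le_lt_succ_of_le_of_lt h0 hm
      exact ⟨j, by omega, h⟩
    · exact ⟨N, by omega, by omega, hN⟩

namespace IsBlockDecomp

variable {RS : RSets P} {f : ℕ → RNode P} {ts : List (GStmt P)} {N : ℕ} {c : ℕ → ℕ}

lemma le_length (hbd : IsBlockDecomp RS f ts N c) {j : ℕ} (hj : j ≤ N) : c j ≤ ts.length :=
  calc c j ≤ c N := (strictMonoOn_Iic_of_lt_succ fun m hm => by simpa using hbd.mono m hm)
        |>.monotoneOn hj le_rfl hj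
    _ = ts.length := hbd.last

lemma tidAt_eq (hbd : IsBlockDecomp RS f ts N c) {j : ℕ} (hj : j < N) {m : ℕ}
    (h1 : c j ≤ m) (h2 : m < c (j+1)) : tidAt ts m = tidAt ts (c j) := by
  rcases h1.eq_or_lt with rfl | h1
  · rfl
  · exact (hbd.inside j hj m h1 h2).1

lemma flatten_blocks (hbd : IsBlockDecomp RS f ts N c) :
    ((List.range N).map fun j => (ts.drop (c j)).take (c (j+1) - c j)).flatten = ts := by
  rw [flatten_map_range_drop_take ts hbd.zero N fun j hj => (hbd.mono j hj).le, hbd.last,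
    List.take_length]

/-- Inside a block its thread is normal, and a normal thread can only run nsync statements. -/
lemma isNsync_of_inside (hnb : NoBarriers P) (hpath : IsPathFn RS f ts)
    (hbd : IsBlockDecomp RS f ts N c) {j : ℕ} (hj : j < N) {m : ℕ} (h1 : c j < m)
    (h2 : m < c (j+1)) {t : GStmt P} (ht : ts[m]? = some t) : t.isNsync := by
  obtain ⟨-, t', ht', hnorm⟩ := hbd.inside j hj m h1 h2
  obtain rfl : t = t' := Option.some.inj (ht.symm.trans ht')
  have hm : m < ts.length := (List.getElem?_eq_some_iff.1 ht).1
  obtain rfl : ts[m] = t := (List.getElem?_eq_some_iff.1 ht).2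
  exact (hpath.rEdge hm).1.isNsync_of_not_mem_R hnb RS hnorm.1

lemma exists_eq_of_not_isNsync (hnb : NoBarriers P) (hpath : IsPathFn RS f ts)
    (hbd : IsBlockDecomp RS f ts N c) {m : ℕ} (hm : m < ts.length) (hns : ¬ ts[m].isNsync) :
    ∃ j, j < N ∧ c j = m := by
  obtain ⟨j, hj, h1, h2⟩ :=
    exists_le_lt_succ_of_le_of_lt (c := c) (by rw [hbd.zero]; omega) (hbd.last ▸ hm)
  rcases h1.eq_or_lt with he | hlt
  · exact ⟨j, hj, he⟩
  · exact absurd (hbd.isNsync_of_inside hnb hpath hj hlt h2 (List.getElem?_eq_getElem hm)) hns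

/-- The thread `i'` of block `j+1` does not move during block `j`, so it is already normal at
the start of block `j`; the priority rule of the race-detecting graph then makes the thread of
block `j` normal there and at most `i'`, and the boundary rule makes it different from `i'`. -/
lemma blockInitial_of_succ (hnb : NoBarriers P) (hpath : IsPathFn RS f ts)
    (hbd : IsBlockDecomp RS f ts N c) {j : ℕ} (hj : j + 1 < N)
    (hinit : BlockInitial RS f ts c (j+1)) :
    BlockInitial RS f ts c j ∧
      ∃ t t', ts[c j]? = some t ∧ ts[c (j+1)]? = some t' ∧ t.1 < t'.1 := by
  obtain ⟨t', ht', hnorm'⟩ := hinit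
  have hlt : c (j+1) < ts.length :=
    (hbd.mono (j+1) hj).trans_le (hbd.le_length hj)
  have hcj : c j < ts.length := (hbd.mono j (by omega)).trans hlt
  have hne : ts[c j].1 ≠ t'.1 := fun he => hbd.boundary j (by omega) hlt
    ⟨by rw [tidAt_of_lt hcj, he]; simp [tidAt, ht'], t', ht', hnorm'⟩
  have hstill : (f (c (j+1))).st.loc t'.1 = (f (c j)).st.loc t'.1 :=
    hpath.loc_eq_of_tidAt_ne (hbd.mono j (by omega)).le hlt.le fun m h1 h2 => by
      rw [hbd.tidAt_eq (by omega) h1 h2, tidAt_of_lt hcj]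
      exact fun h => hne (Option.some.inj h)
  have hnormj : Normal RS (f (c j)).st t'.1 := hnorm'.of_loc_eq hnb hstill.symm
  obtain ⟨hnt, hmin⟩ := (hpath.rEdge hcj).2.2.2.2.2 ⟨t'.1, hnormj⟩
  have ht : ts[c j]? = some ts[c j] := List.getElem?_eq_getElem hcj
  exact ⟨⟨_, ht, hnt⟩, _, t', ht, ht', (hmin t'.1 hnormj).lt_of_ne hne⟩

end IsBlockDecomp

/-- Basic properties of the block decomposition of a finite path in the
race-detecting state graph. -/
theorem stmt10 (P : Program) (hnb : NoBarriers P) (RS : RSets P)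
    (f : ℕ → RNode P) (ts : List (GStmt P)) (hpath : IsPathFn RS f ts)
    (N : ℕ) (c : ℕ → ℕ) (hbd : IsBlockDecomp RS f ts N c) :
    (∀ j, j < N → c j < c (j+1) ∧
      ∀ m, c j ≤ m → m < c (j+1) → tidAt ts m = tidAt ts (c j)) ∧
    ts = ((List.range N).map (fun j => (ts.drop (c j)).take (c (j+1) - c j))).flatten ∧
    (∀ m (h : m < ts.length), ¬ (ts.get ⟨m, h⟩).isNsync → ∃ j, j < N ∧ c j = m) ∧
    (∀ j, j < N → ∀ m, c j < m → m < c (j+1) →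
      ∀ t, ts[m]? = some t → t.isNsync) ∧
    (∀ j, j + 1 < N → BlockInitial RS f ts c (j+1) →
      BlockInitial RS f ts c j ∧
      ∃ t t', ts[c j]? = some t ∧ ts[c (j+1)]? = some t' ∧ t.1 < t'.1) :=
  ⟨fun _ hj => ⟨hbd.mono _ hj, fun _ => hbd.tidAt_eq hj⟩,
    hbd.flatten_blocks.symm,
    fun _ hm hns => hbd.exists_eq_of_not_isNsync hnb hpath hm (by simpa using hns),
    fun _ hj _ h1 h2 _ => hbd.isNsync_of_inside hnb hpath hj h1 h2,
    fun _ hj => hbd.blockInitial_of_succ hnb hpath hj⟩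

end MC
end
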